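/- For every l ≥ 0, the space of ℝ²-valued polynomial vector fields of total degree ≤ l on ℝ² decomposes as a direct sum ℛ^l ⊕ ℛ^{c,l}, where ℛ^l = { rot p := (∂₂p, −∂₁p) : p polynomial of degree ≤ l+1 } and ℛ^{c,l} = { x q : q polynomial of degree ≤ l−1 }. -/

import Mathlib

/-!
For a field `v` whose components are homogeneous of degree `k`, Euler's identity gives
`(k + 1) • v = x · div v - rot (x₁ v₂ - x₂ v₁)`, and the two terms lie in `ℛ^l` and `ℛ^{c,l}`;
summing over homogeneous components splits every field of degree `≤ l`. The sum is direct
because `div ∘ rot = 0`, whereas `div (x q) = E q + 2 q` for the Euler operator `E`, which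
multiplies each monomial of degree `d` by `d`; so `E + 2` is injective.
-/

open MvPolynomial

/-- ℝ²-valued polynomial vector fields with components of total degree ≤ l. -/
noncomputable def polyVec2 (l : ℕ) : Submodule ℝ (Fin 2 → MvPolynomial (Fin 2) ℝ) :=
  Submodule.pi Set.univ fun _ => MvPolynomial.restrictTotalDegree (Fin 2) ℝ l

/-- ℛ^l = vector curls (rot p = (∂₂p, −∂₁p)) of polynomials of degree ≤ l+1. -/
noncomputable def Rsp2 (l : ℕ) : Submodule ℝ (Fin 2 → MvPolynomial (Fin 2) ℝ) :=
  Submodule.span ℝ {v | ∃ p : MvPolynomial (Fin 2) ℝ,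
    p.totalDegree ≤ l + 1 ∧ v = ![MvPolynomial.pderiv 1 p, -(MvPolynomial.pderiv 0 p)]}

/-- The coordinate vector x = (x₁, x₂). -/
noncomputable def xvec2 : Fin 2 → MvPolynomial (Fin 2) ℝ := ![X 0, X 1]

/-- ℛ^{c,l} = x 𝒫^{l−1} (reduced to {0} when l = 0). -/
noncomputable def Rcsp2 (l : ℕ) : Submodule ℝ (Fin 2 → MvPolynomial (Fin 2) ℝ) :=
  Submodule.span ℝ {v | ∃ q : MvPolynomial (Fin 2) ℝ,
    q.totalDegree + 1 ≤ l ∧ v = fun i => xvec2 i * q}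

namespace MvPolynomial

variable {σ R : Type*}

section CommSemiring
variable [CommSemiring R]

theorem coeff_X_mul_pderiv (i : σ) (p : MvPolynomial σ R) (m : σ →₀ ℕ) :
    coeff m (X i * pderiv i p) = m i • coeff m p := by
  classical
  induction p using MvPolynomial.induction_on' with
  | monomial s a =>
    rw [X_mul_pderiv_monomial, coeff_smul, coeff_monomial]
    split_ifs with h <;> simp [h]
  | add p q hp hq => simp only [mul_add, map_add, coeff_add, hp, hq, smul_add]

theorem totalDegree_pderiv_le (i : σ) (p : MvPolynomial σ R) :
    (pderiv i p).totalDegree ≤ p.totalDegree - 1 := by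
  refine Finset.sup_le fun m hm => ?_
  rw [mem_support_iff, coeff_pderiv] at hm
  have hdeg : Finsupp.degree (m + Finsupp.single i 1) ≤ p.totalDegree :=
    le_totalDegree (mem_support_iff.mpr (left_ne_zero_of_mul hm))
  rw [map_add, Finsupp.degree_single] at hdeg
  change Finsupp.degree m ≤ _
  omega

theorem IsHomogeneous.pderiv_eq_zero {φ : MvPolynomial σ R} (h : φ.IsHomogeneous 0) (i : σ) :
    pderiv i φ = 0 := by
  rw [← totalDegree_zero_iff_isHomogeneous, totalDegree_eq_zero_iff_eq_C] at h
  rw [h, pderiv_C]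

theorem sum_homogeneousComponent_of_totalDegree_le {φ : MvPolynomial σ R} {n : ℕ}
    (h : φ.totalDegree ≤ n) : ∑ k ∈ Finset.range (n + 1), homogeneousComponent k φ = φ := by
  conv_rhs => rw [← sum_homogeneousComponent φ]
  refine (Finset.sum_subset (Finset.range_subset_range.mpr (by omega)) fun k _ hk => ?_).symm
  exact homogeneousComponent_eq_zero _ _ (by simpa using hk)

end CommSemiring

section CommRing
variable [CommRing R]

theorem pderiv_pderiv_comm (i j : σ) (p : MvPolynomial σ R) :
    pderiv i (pderiv j p) = pderiv j (pderiv i p) := by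
  suffices ⁅pderiv i, pderiv j⁆ = (0 : Derivation R (MvPolynomial σ R) (MvPolynomial σ R)) by
    rw [← sub_eq_zero, ← Derivation.commutator_apply, this, Derivation.zero_apply]
  refine derivation_ext fun k => ?_
  classical
  simp [Derivation.commutator_apply, pderiv_X, Pi.single_apply, apply_ite]

theorem eq_zero_of_sum_X_mul_pderiv_add_nsmul [Fintype σ] [IsAddTorsionFree R]
    {q : MvPolynomial σ R} {c : ℕ} (hc : c ≠ 0) (h : ∑ i, X i * pderiv i q + c • q = 0) :
    q = 0 := by
  ext m
  have hm := congr(coeff m $h)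
  simp only [coeff_add, coeff_sum, coeff_X_mul_pderiv, coeff_smul, coeff_zero, ← Finset.sum_smul,
    ← add_smul] at hm
  exact (smul_eq_zero.mp hm).resolve_left (by omega)

end CommRing

end MvPolynomial

section Divergence

variable {σ R : Type*} [CommRing R]

noncomputable def mulX : MvPolynomial σ R →ₗ[R] (σ → MvPolynomial σ R) :=
  LinearMap.pi fun i => LinearMap.mulLeft R (X i)

theorem mulX_apply (q : MvPolynomial σ R) (i : σ) : mulX q i = X i * q := rfl

variable [Fintype σ]

noncomputable def divergence : (σ → MvPolynomial σ R) →ₗ[R] MvPolynomial σ R :=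
  ∑ i, (pderiv i).toLinearMap ∘ₗ LinearMap.proj i

theorem divergence_apply (v : σ → MvPolynomial σ R) : divergence v = ∑ i, pderiv i (v i) := by
  simp [divergence]

theorem divergence_mulX (q : MvPolynomial σ R) :
    divergence (mulX q) = ∑ i, X i * pderiv i q + Fintype.card σ • q := by
  simp [divergence_apply, mulX_apply, Finset.sum_add_distrib, add_comm]

theorem range_mulX_inf_ker_divergence [Nonempty σ] [IsAddTorsionFree R] :
    LinearMap.range (mulX (σ := σ) (R := R)) ⊓ LinearMap.ker divergence = ⊥ := by
  rw [eq_bot_iff]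
  rintro _ ⟨⟨q, rfl⟩, hq⟩
  rw [SetLike.mem_coe, LinearMap.mem_ker, divergence_mulX] at hq
  rw [eq_zero_of_sum_X_mul_pderiv_add_nsmul Fintype.card_ne_zero hq, map_zero]
  exact zero_mem _

theorem isHomogeneous_divergence {v : σ → MvPolynomial σ R} {k : ℕ}
    (hv : ∀ i, (v i).IsHomogeneous k) : (divergence v).IsHomogeneous (k - 1) := by
  rw [divergence_apply]
  exact IsHomogeneous.sum _ _ _ fun i _ => (hv i).pderiv

theorem divergence_eq_zero_of_isHomogeneous_zero {v : σ → MvPolynomial σ R}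
    (hv : ∀ i, (v i).IsHomogeneous 0) : divergence v = 0 := by
  simp [divergence_apply, (hv _).pderiv_eq_zero]

end Divergence

section Plane

variable {R : Type*} [CommRing R]

noncomputable def rot (p : MvPolynomial (Fin 2) R) : Fin 2 → MvPolynomial (Fin 2) R :=
  ![pderiv 1 p, -pderiv 0 p]

noncomputable def crossX (v : Fin 2 → MvPolynomial (Fin 2) R) : MvPolynomial (Fin 2) R :=
  X 0 * v 1 - X 1 * v 0

theorem divergence_rot (p : MvPolynomial (Fin 2) R) : divergence (rot p) = 0 := by
  simp only [divergence_apply, Fin.sum_univ_two, rot, Matrix.cons_val_zero, Matrix.cons_val_one,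
    Matrix.cons_val_fin_one, map_neg]
  rw [pderiv_pderiv_comm 0 1, add_neg_cancel]

theorem isHomogeneous_crossX {v : Fin 2 → MvPolynomial (Fin 2) R} {k : ℕ}
    (hv : ∀ i, (v i).IsHomogeneous k) : (crossX v).IsHomogeneous (k + 1) := by
  rw [add_comm]
  exact ((isHomogeneous_X R 0).mul (hv 1)).sub ((isHomogeneous_X R 1).mul (hv 0))

theorem succ_nsmul_eq_mulX_divergence_sub_rot_crossX {v : Fin 2 → MvPolynomial (Fin 2) R} {k : ℕ}
    (hv : ∀ i, (v i).IsHomogeneous k) :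
    (k + 1) • v = mulX (divergence v) - rot (crossX v) := by
  have euler0 := (hv 0).sum_X_mul_pderiv
  have euler1 := (hv 1).sum_X_mul_pderiv
  simp only [Fin.sum_univ_two, nsmul_eq_mul] at euler0 euler1
  ext1 i
  fin_cases i <;>
    simp only [Fin.zero_eta, Fin.mk_one, Pi.sub_apply, Pi.smul_apply, nsmul_eq_mul, Nat.cast_succ,
      mulX_apply, divergence_apply, Fin.sum_univ_two, rot, crossX, Matrix.cons_val_zero,
      Matrix.cons_val_one, Matrix.cons_val_fin_one, map_sub, pderiv_mul, pderiv_X_self,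
      pderiv_X_of_ne zero_ne_one, pderiv_X_of_ne one_ne_zero]
  · linear_combination -euler0
  · linear_combination -euler1

end Plane

theorem mem_polyVec2 {l : ℕ} {v : Fin 2 → MvPolynomial (Fin 2) ℝ} :
    v ∈ polyVec2 l ↔ ∀ i, (v i).totalDegree ≤ l := by
  simp [polyVec2, Submodule.mem_pi, mem_restrictTotalDegree]

theorem mulX_eq_xvec2_mul (q : MvPolynomial (Fin 2) ℝ) : mulX q = fun i => xvec2 i * q := by
  ext1 i; fin_cases i <;> rfl

theorem rot_mem_Rsp2 {l : ℕ} {p : MvPolynomial (Fin 2) ℝ} (hp : p.totalDegree ≤ l + 1) :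
    rot p ∈ Rsp2 l :=
  Submodule.subset_span ⟨p, hp, rfl⟩

theorem mulX_mem_Rcsp2 {l : ℕ} {q : MvPolynomial (Fin 2) ℝ} (hq : q.totalDegree + 1 ≤ l) :
    mulX q ∈ Rcsp2 l :=
  Submodule.subset_span ⟨q, hq, mulX_eq_xvec2_mul q⟩

theorem Rsp2_le_ker_divergence (l : ℕ) : Rsp2 l ≤ LinearMap.ker divergence :=
  Submodule.span_le.mpr fun _ ⟨p, _, hv⟩ => hv ▸ divergence_rot p

theorem Rcsp2_le_range_mulX (l : ℕ) : Rcsp2 l ≤ LinearMap.range mulX :=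
  Submodule.span_le.mpr fun _ ⟨q, _, hv⟩ => ⟨q, hv ▸ mulX_eq_xvec2_mul q⟩

theorem Rsp2_le_polyVec2 (l : ℕ) : Rsp2 l ≤ polyVec2 l := by
  refine Submodule.span_le.mpr fun _ ⟨p, hp, hv⟩ => hv ▸ mem_polyVec2.mpr fun i => ?_
  fin_cases i
  · exact (totalDegree_pderiv_le 1 p).trans (by omega)
  · exact (totalDegree_neg _).trans_le ((totalDegree_pderiv_le 0 p).trans (by omega))

theorem Rcsp2_le_polyVec2 (l : ℕ) : Rcsp2 l ≤ polyVec2 l := by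
  refine Submodule.span_le.mpr fun _ ⟨q, hq, hv⟩ => hv ▸ mem_polyVec2.mpr fun i => ?_
  have hx : (xvec2 i).totalDegree = 1 := by fin_cases i <;> exact totalDegree_X _
  exact (totalDegree_mul _ _).trans (by omega)

theorem mem_Rsp2_sup_Rcsp2_of_isHomogeneous {v : Fin 2 → MvPolynomial (Fin 2) ℝ} {k l : ℕ}
    (hv : ∀ i, (v i).IsHomogeneous k) (hkl : k ≤ l) : v ∈ Rsp2 l ⊔ Rcsp2 l := by
  have hdecomp : v = ((k : ℝ) + 1)⁻¹ • mulX (divergence v) - ((k : ℝ) + 1)⁻¹ • rot (crossX v) := by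
    rw [← smul_sub, ← succ_nsmul_eq_mulX_divergence_sub_rot_crossX hv, ← Nat.cast_smul_eq_nsmul ℝ,
      smul_smul, Nat.cast_succ, inv_mul_cancel₀ (by positivity), one_smul]
  rw [hdecomp]
  refine Submodule.sub_mem _ (Submodule.mem_sup_right (Submodule.smul_mem _ _ ?_))
    (Submodule.mem_sup_left (Submodule.smul_mem _ _ ?_))
  · rcases k with _ | k
    · rw [divergence_eq_zero_of_isHomogeneous_zero hv, map_zero]
      exact zero_mem _
    · exact mulX_mem_Rcsp2 ((isHomogeneous_divergence hv).totalDegree_le.trans_lt (by omega))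
  · exact rot_mem_Rsp2 ((isHomogeneous_crossX hv).totalDegree_le.trans (by omega))

theorem polyVec2_le_Rsp2_sup_Rcsp2 (l : ℕ) : polyVec2 l ≤ Rsp2 l ⊔ Rcsp2 l := by
  intro v hv
  have hsum : ∑ k ∈ Finset.range (l + 1), (fun i => homogeneousComponent k (v i)) = v := by
    rw [Finset.sum_fn]
    exact funext fun i => sum_homogeneousComponent_of_totalDegree_le (mem_polyVec2.mp hv i)
  rw [← hsum]
  exact Submodule.sum_mem _ fun k hk => mem_Rsp2_sup_Rcsp2_of_isHomogeneous
    (fun i => homogeneousComponent_isHomogeneous k _) (Nat.lt_succ_iff.mp (Finset.mem_range.mp hk))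

/-- For every `l ≥ 0`, the ℝ²-valued polynomial fields of degree ≤ l decompose as
the direct sum ℛ^l ⊕ ℛ^{c,l}. -/
theorem polyVec2_eq_rot_directSum_rotComplement (l : ℕ) :
    Rsp2 l ⊔ Rcsp2 l = polyVec2 l ∧ Rsp2 l ⊓ Rcsp2 l = ⊥ := by
  refine ⟨le_antisymm (sup_le (Rsp2_le_polyVec2 l) (Rcsp2_le_polyVec2 l))
    (polyVec2_le_Rsp2_sup_Rcsp2 l), ?_⟩
  rw [eq_bot_iff, ← range_mulX_inf_ker_divergence, inf_comm]
  exact inf_le_inf (Rcsp2_le_range_mulX l) (Rsp2_le_ker_divergence l)
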